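/- For any integer n ≥ 2 and any unit vectors |ψ⟩, |ψ'⟩ ∈ (ℂ²)^{⊗n}, the GME-concurrence satisfies |C_GME(|ψ⟩) − C_GME(|ψ'⟩)| ≤ 2^{3/4} · √(‖ψ − ψ'‖₁). -/

import Mathlib

open scoped BigOperators ComplexConjugate ComplexOrder

noncomputable section

namespace QIpaper

/-- Inner product `⟨ψ|φ⟩`, conjugate-linear in the first argument. -/
def braket {I : Type*} [Fintype I] (ψ φ : I → ℂ) : ℂ := ∑ x, conj (ψ x) * φ x

/-- Outer product `|ψ⟩⟨ψ|`. -/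
def dm {I : Type*} (ψ : I → ℂ) : Matrix I I ℂ := Matrix.of fun x y => ψ x * conj (ψ y)

open Classical in
/-- Positive semidefinite square root (junk value `0` on non-PSD matrices). -/
def psdSqrt {I : Type*} [Fintype I] [DecidableEq I] (A : Matrix I I ℂ) : Matrix I I ℂ :=
  if h : A.PosSemidef then
    h.1.eigenvectorUnitary.1 * Matrix.diagonal ((↑) ∘ (Real.sqrt ∘ h.1.eigenvalues)) *
      (star h.1.eigenvectorUnitary : Matrix I I ℂ) else 0

/-- The trace norm `‖A‖₁ = tr √(AᴴA)`. -/
def traceNorm {I : Type*} [Fintype I] [DecidableEq I] (A : Matrix I I ℂ) : ℝ :=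
  (psdSqrt (A.conjTranspose * A)).trace.re

/-- Fidelity `F(ρ,σ) = tr √(√ρ σ √ρ)`. -/
def fidelity {I : Type*} [Fintype I] [DecidableEq I] (ρ σ : Matrix I I ℂ) : ℝ :=
  (psdSqrt (psdSqrt ρ * σ * psdSqrt ρ)).trace.re

/-- Purity `tr(ρ²)`. -/
def purity {I : Type*} [Fintype I] (ρ : Matrix I I ℂ) : ℝ := ((ρ * ρ).trace).re

def sigmaX : Matrix (Fin 2) (Fin 2) ℂ := !![0, 1; 1, 0]
def sigmaY : Matrix (Fin 2) (Fin 2) ℂ := !![0, -Complex.I; Complex.I, 0]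
def sigmaZ : Matrix (Fin 2) (Fin 2) ℂ := !![1, 0; 0, -1]

/-- `σ_y^{⊗I}` on the qubits indexed by `I`. -/
def sigmaYn {I : Type*} [Fintype I] [DecidableEq I] : Matrix (I → Fin 2) (I → Fin 2) ℂ :=
  Matrix.of fun x y => ∏ k, sigmaY (x k) (y k)

/-- The `n`-tangle `τ(ψ) = |⟨ψ|σ_y^{⊗n}|ψ*⟩|`. -/
def tangle {I : Type*} [Fintype I] [DecidableEq I] (ψ : (I → Fin 2) → ℂ) : ℝ :=
  ‖∑ x, ∑ y, conj (ψ x) * sigmaYn x y * conj (ψ y)‖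

/-- Entrywise complex conjugate of a matrix. -/
def conjM {I J : Type*} (ρ : Matrix I J ℂ) : Matrix I J ℂ := Matrix.of fun x y => conj (ρ x y)

/-- `ρ̃ = σ_y^{⊗n} ρ* σ_y^{⊗n}`. -/
def tildeM {I : Type*} [Fintype I] [DecidableEq I] (ρ : Matrix (I → Fin 2) (I → Fin 2) ℂ) :
    Matrix (I → Fin 2) (I → Fin 2) ℂ := sigmaYn * conjM ρ * sigmaYn

/-- The Wootters tilde `|ψ̃⟩ = σ_y^{⊗n}|ψ*⟩`. -/
def wtilde {I : Type*} [Fintype I] [DecidableEq I] (ψ : (I → Fin 2) → ℂ) : (I → Fin 2) → ℂ :=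
  sigmaYn.mulVec (fun x => conj (ψ x))

/-- Reduced density matrix of the pure state `ψ` on the qubits in `s`
(tracing out the complement). -/
def reduced {n : ℕ} (s : Finset (Fin n)) (ψ : (Fin n → Fin 2) → ℂ) :
    Matrix ({i : Fin n // i ∈ s} → Fin 2) ({i : Fin n // i ∈ s} → Fin 2) ℂ :=
  Matrix.of fun a b => ∑ c : {i : Fin n // i ∉ s} → Fin 2,
    ψ (fun i => if h : i ∈ s then a ⟨i, h⟩ else c ⟨i, h⟩) *
    conj (ψ (fun i => if h : i ∈ s then b ⟨i, h⟩ else c ⟨i, h⟩))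

/-- GME-concurrence `C_GME(ψ) = min_{∅ ⊊ γ ⊊ [n]} √(2(1 − tr ψ_γ²))`. -/
def gme {n : ℕ} (ψ : (Fin n → Fin 2) → ℂ) : ℝ :=
  sInf {r : ℝ | ∃ γ : Finset (Fin n), γ ≠ ∅ ∧ γ ≠ Finset.univ ∧
    r = Real.sqrt (2 * (1 - purity (reduced γ ψ)))}

/-- Concentratable entanglement `C(ψ; s) = 1 − 2^{−|s|} Σ_{γ⊆s} tr(ψ_γ²)`. -/
def CE {n : ℕ} (ψ : (Fin n → Fin 2) → ℂ) (s : Finset (Fin n)) : ℝ :=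
  1 - (1 / 2 ^ s.card) * ∑ γ ∈ s.powerset, purity (reduced γ ψ)

/-- The subnormalized post-measurement vector `(⟨v|⊗I)|Ψ⟩`. -/
def contract {IA IB : Type*} [Fintype IA] (v : IA → ℂ) (Ψ : IA × IB → ℂ) : IB → ℂ :=
  fun y => ∑ x, conj (v x) * Ψ (x, y)

/-- Probability `p_v = ⟨Ψ|(|v⟩⟨v| ⊗ I)|Ψ⟩` of outcome `v`. -/
def prob {IA IB : Type*} [Fintype IA] [Fintype IB] (v : IA → ℂ) (Ψ : IA × IB → ℂ) : ℝ :=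
  (braket (contract v Ψ) (contract v Ψ)).re

/-- Normalized post-measurement state (the zero vector when the probability vanishes). -/
def postState {IA IB : Type*} [Fintype IA] [Fintype IB] (v : IA → ℂ) (Ψ : IA × IB → ℂ) :
    IB → ℂ := fun y => ((Real.sqrt (prob v Ψ) : ℂ))⁻¹ * contract v Ψ y

/-- `b` is an orthonormal family. (An orthonormal family indexed by the space's own
index type is an orthonormal basis.) -/
def ONB {J I : Type*} [Fintype I] [DecidableEq J] (b : J → I → ℂ) : Prop :=
  ∀ i j, braket (b i) (b j) = if i = j then 1 else 0

/-- Average post-measurement entanglement `Ē_β(Ψ) = Σ_i p_i E(φ_i)`. -/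
def avgE {ι IA IB : Type*} [Fintype ι] [Fintype IA] [Fintype IB]
    (E : (IB → ℂ) → ℝ) (b : ι → IA → ℂ) (Ψ : IA × IB → ℂ) : ℝ :=
  ∑ i, prob (b i) Ψ * E (postState (b i) Ψ)

/-- Multipartite entanglement of assistance: supremum of `Ē_β` over all
orthonormal bases `β` of `H_A`. -/
def Lglobal {IA IB : Type*} [Fintype IA] [Fintype IB] [DecidableEq IA]
    (E : (IB → ℂ) → ℝ) (Ψ : IA × IB → ℂ) : ℝ :=
  sSup {r : ℝ | ∃ b : IA → IA → ℂ, ONB b ∧ r = avgE E b Ψ}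

/-- Tensor-product basis of `(ℂ²)^{⊗K}` built from single-qubit bases. -/
def productBasis {K : Type*} [Fintype K] (q : K → Fin 2 → Fin 2 → ℂ) :
    (K → Fin 2) → (K → Fin 2) → ℂ :=
  fun i x => ∏ k, q k (i k) (x k)

/-- Localizable multipartite entanglement: supremum of `Ē_β` over product bases of
single-qubit orthonormal bases of `H_A = (ℂ²)^{⊗K}`. -/
def Lloc {K IB : Type*} [Fintype K] [DecidableEq K] [Fintype IB]
    (E : (IB → ℂ) → ℝ) (Ψ : (K → Fin 2) × IB → ℂ) : ℝ :=
  sSup {r : ℝ | ∃ q : K → Fin 2 → Fin 2 → ℂ, (∀ k, ONB (q k)) ∧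
    r = avgE E (productBasis q) Ψ}

/-- Partial trace over the `A` system of `|Ψ⟩⟨Ψ|`. -/
def ptraceA {IA IB : Type*} [Fintype IA] (Ψ : IA × IB → ℂ) : Matrix IB IB ℂ :=
  Matrix.of fun y y' => ∑ x, Ψ (x, y) * conj (Ψ (x, y'))

/-- Reduced density matrix of `|Ψ⟩⟨Ψ|` on the subset `s` of the `B` qubits. -/
def reducedB {IA : Type*} [Fintype IA] {n : ℕ} (s : Finset (Fin n))
    (Ψ : IA × (Fin n → Fin 2) → ℂ) :
    Matrix ({i : Fin n // i ∈ s} → Fin 2) ({i : Fin n // i ∈ s} → Fin 2) ℂ :=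
  Matrix.of fun a b => ∑ x : IA, ∑ c : {i : Fin n // i ∉ s} → Fin 2,
    Ψ (x, fun i => if h : i ∈ s then a ⟨i, h⟩ else c ⟨i, h⟩) *
    conj (Ψ (x, fun i => if h : i ∈ s then b ⟨i, h⟩ else c ⟨i, h⟩))

/-! The swap trick writes the purity `tr ψ_γ²` as the expectation `⟨ψ⊗ψ| S_γ |ψ⊗ψ⟩` of the
unitary `S_γ` exchanging the `γ`-qubits of two copies. For any contraction `S` and unit vectors
`x, y`, polarization along `x ± e^{iθ} y` gives `|⟨x|S|x⟩ - ⟨y|S|y⟩| ≤ 2 √(1 - |⟨x|y⟩|²)`.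
With `s = |⟨ψ|ψ'⟩|` the purities therefore differ by at most `2 √(1 - s⁴) ≤ 2√2 √(1 - s²)`,
and `2 √(1 - s²)` is exactly `‖ψ - ψ'‖₁`, because `Δ = |ψ⟩⟨ψ| - |ψ'⟩⟨ψ'|` satisfies
`Δ³ = (1 - s²) Δ`. As `|√a - √b| ≤ √|a - b|`, every bipartite concurrence `√(2(1 - tr ψ_γ²))`
moves by at most `√(2√2 ‖ψ - ψ'‖₁) = 2^{3/4} √‖ψ - ψ'‖₁`, and so does their minimum. -/

open scoped InnerProductSpace

lemma abs_sqrt_sub_sqrt_le (a b : ℝ) : |√a - √b| ≤ √|a - b| := by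
  refine Real.abs_le_sqrt ?_
  calc (√a - √b) ^ 2 = |√a - √b| * |√a - √b| := by rw [sq, abs_mul_abs_self]
    _ ≤ |√a + √b| * |√a - √b| := by
        refine mul_le_mul_of_nonneg_right ((abs_sub _ _).trans_eq ?_) (abs_nonneg _)
        rw [abs_of_nonneg (Real.sqrt_nonneg a), abs_of_nonneg (Real.sqrt_nonneg b),
          abs_of_nonneg (by positivity)]
    _ = |max a 0 - max b 0| := by rw [← abs_mul, ← sq_sub_sq, Real.sq_sqrt', Real.sq_sqrt']
    _ ≤ |a - b| := abs_max_sub_max_le_abs a b 0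

section InfImage

variable {ι : Type*} {s : Set ι} {f g : ι → ℝ} {D : ℝ}

lemma sInf_image_le_sInf_image_add (hs : s.Nonempty) (hf : BddBelow (f '' s))
    (h : ∀ i ∈ s, f i - g i ≤ D) : sInf (f '' s) ≤ sInf (g '' s) + D := by
  rw [← sub_le_iff_le_add]
  refine le_csInf (hs.image g) ?_
  rintro _ ⟨i, hi, rfl⟩
  linarith [csInf_le hf (Set.mem_image_of_mem f hi), h i hi]

lemma abs_sInf_image_sub_sInf_image_le (hf : BddBelow (f '' s)) (hg : BddBelow (g '' s))
    (hD : 0 ≤ D) (h : ∀ i ∈ s, |f i - g i| ≤ D) : |sInf (f '' s) - sInf (g '' s)| ≤ D := by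
  rcases s.eq_empty_or_nonempty with rfl | hs
  · simpa using hD
  refine abs_sub_le_iff.mpr ⟨?_, ?_⟩
  · linarith [sInf_image_le_sInf_image_add hs hf fun i hi => (abs_sub_le_iff.mp (h i hi)).1]
  · linarith [sInf_image_le_sInf_image_add hs hg fun i hi => (abs_sub_le_iff.mp (h i hi)).2]

end InfImage

lemma exists_norm_eq_one_mul_eq_norm (a : ℂ) : ∃ w : ℂ, ‖w‖ = 1 ∧ w * a = ‖a‖ := by
  refine ⟨Complex.exp (-(a.arg : ℂ) * Complex.I),
    by simpa using Complex.norm_exp_ofReal_mul_I (-a.arg), ?_⟩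
  conv_lhs => rw [← Complex.norm_mul_exp_arg_mul_I a]
  rw [mul_left_comm, ← Complex.exp_add]
  simp

lemma norm_inner_map_self_sub_le {E : Type*} [NormedAddCommGroup E] [InnerProductSpace ℂ E]
    (T : E →ₗ[ℂ] E) (hT : ∀ u, ‖T u‖ ≤ ‖u‖) {x y : E} (hx : ‖x‖ = 1) (hy : ‖y‖ = 1) :
    ‖⟪T x, x⟫_ℂ - ⟪T y, y⟫_ℂ‖ ≤ 2 * √(1 - ‖⟪x, y⟫_ℂ‖ ^ 2) := by
  obtain ⟨w, hw, hwxy⟩ := exists_norm_eq_one_mul_eq_norm ⟪x, y⟫_ℂ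
  set s := ‖⟪x, y⟫_ℂ‖
  set z := w • y
  have hz : ‖z‖ = 1 := by rw [norm_smul, hw, hy, one_mul]
  have hxz : ⟪x, z⟫_ℂ = s := by rw [inner_smul_right, hwxy]
  have hTz : ⟪T z, z⟫_ℂ = ⟪T y, y⟫_ℂ := by
    rw [map_smul, inner_smul_left, inner_smul_right, ← mul_assoc, Complex.conj_mul', hw]
    simp
  have hpol : (2 : ℂ) * (⟪T x, x⟫_ℂ - ⟪T z, z⟫_ℂ) =
      ⟪T (x + z), x - z⟫_ℂ + ⟪T (x - z), x + z⟫_ℂ := by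
    simp only [map_add, map_sub, inner_add_left, inner_sub_left, inner_add_right,
      inner_sub_right]
    ring
  have hoff : ∀ u v : E, ‖⟪T u, v⟫_ℂ‖ ≤ ‖u‖ * ‖v‖ := fun u v =>
    (norm_inner_le_norm _ _).trans (mul_le_mul_of_nonneg_right (hT u) (norm_nonneg v))
  have hsum : ‖x + z‖ ^ 2 * ‖x - z‖ ^ 2 = 4 * (1 - s ^ 2) := by
    rw [@norm_add_sq ℂ, @norm_sub_sq ℂ, hxz, hx, hz, RCLike.re_to_complex, Complex.ofReal_re]
    ring
  have hprod : ‖x + z‖ * ‖x - z‖ = 2 * √(1 - s ^ 2) := by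
    rw [← Real.sqrt_sq (by positivity : 0 ≤ ‖x + z‖ * ‖x - z‖), mul_pow, hsum,
      Real.sqrt_mul (by norm_num), show (4 : ℝ) = 2 ^ 2 by norm_num, Real.sqrt_sq (by norm_num)]
  have h2 : ‖(2 : ℂ) * (⟪T x, x⟫_ℂ - ⟪T z, z⟫_ℂ)‖ ≤ 2 * (‖x + z‖ * ‖x - z‖) := by
    rw [hpol]
    refine (norm_add_le _ _).trans ?_
    linarith [hoff (x + z) (x - z), hoff (x - z) (x + z)]
  rw [norm_mul, Complex.norm_two, hTz] at h2
  linarith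

section Braket

variable {I : Type*} [Fintype I]

lemma braket_eq_inner (u v : I → ℂ) :
    braket u v = ⟪(WithLp.toLp 2 u : EuclideanSpace ℂ I), WithLp.toLp 2 v⟫_ℂ := by
  simp [braket, PiLp.inner_apply, mul_comm]

lemma norm_toLp_eq_one {u : I → ℂ} (hu : braket u u = 1) :
    ‖(WithLp.toLp 2 u : EuclideanSpace ℂ I)‖ = 1 := by
  rw [@norm_eq_sqrt_re_inner ℂ, ← braket_eq_inner, hu]
  simp

lemma braket_eq_dotProduct (u v : I → ℂ) : braket u v = star u ⬝ᵥ v := rfl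

lemma braket_swap (u v : I → ℂ) : braket v u = conj (braket u v) := by
  simp only [braket_eq_inner, inner_conj_symm]

lemma braket_mul_braket_swap (u v : I → ℂ) :
    braket u v * braket v u = ((‖braket u v‖ ^ 2 : ℝ) : ℂ) := by
  rw [braket_swap u v, Complex.mul_conj', Complex.ofReal_pow]

lemma braket_comp_perm_eq_inner (σ : Equiv.Perm I) (u v : I → ℂ) :
    braket (u ∘ σ) v = ⟪LinearIsometryEquiv.piLpCongrLeft 2 ℂ ℂ σ.symm (WithLp.toLp 2 u),
      (WithLp.toLp 2 v : EuclideanSpace ℂ I)⟫_ℂ := by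
  rw [braket_eq_inner]
  rfl

lemma braket_comp_equiv {J : Type*} [Fintype J] (e : J ≃ I) (u v : I → ℂ) :
    braket (u ∘ e) (v ∘ e) = braket u v :=
  e.sum_comp fun x => conj (u x) * v x

def tensorSelf (u : I → ℂ) (p : I × I) : ℂ := u p.1 * u p.2

lemma braket_tensorSelf (u v : I → ℂ) :
    braket (tensorSelf u) (tensorSelf v) = braket u v ^ 2 := by
  simp only [braket, tensorSelf, Fintype.sum_prod_type, sq, Finset.sum_mul_sum, map_mul]
  exact Finset.sum_congr rfl fun x _ => Finset.sum_congr rfl fun y _ => by ring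

end Braket

lemma sub_mul_self_mul_self_of_idempotent {R 𝕜 : Type*} [CommRing 𝕜] [Ring R] [Algebra 𝕜 R]
    {P Q : R} {k : 𝕜} (hP : P * P = P) (hQ : Q * Q = Q) (hPQP : P * Q * P = k • P)
    (hQPQ : Q * P * Q = k • Q) : (P - Q) * (P - Q) * (P - Q) = (1 - k) • (P - Q) := by
  have expand : (P - Q) * (P - Q) * (P - Q) = P * P * P - P * P * Q - P * Q * P + P * (Q * Q)
      - Q * (P * P) + Q * P * Q + Q * Q * P - Q * Q * Q := by noncomm_ring
  rw [expand, hP, hQ, hP, hQ, hPQP, hQPQ, sub_smul, one_smul, smul_sub]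
  abel

section TraceNorm

variable {I : Type*}

lemma dm_eq_vecMulVec (u : I → ℂ) : dm u = Matrix.vecMulVec u (star u) := rfl

lemma dm_isHermitian (u : I → ℂ) : (dm u).IsHermitian := by
  rw [Matrix.IsHermitian, dm_eq_vecMulVec, Matrix.conjTranspose_vecMulVec, star_star]

variable [Fintype I]

lemma dm_mul_dm (u v : I → ℂ) : dm u * dm v = Matrix.vecMulVec u (braket u v • star v) := by
  rw [dm_eq_vecMulVec, dm_eq_vecMulVec, Matrix.vecMulVec_mul_vecMulVec, braket_eq_dotProduct]

lemma dm_mul_dm_mul_dm (u v : I → ℂ) :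
    dm u * dm v * dm u = (‖braket u v‖ ^ 2 : ℝ) • dm u := by
  rw [dm_mul_dm, dm_eq_vecMulVec u, Matrix.vecMulVec_mul_vecMulVec, smul_dotProduct,
    ← braket_eq_dotProduct, smul_eq_mul, braket_mul_braket_swap, Matrix.vecMulVec_smul]
  exact (RCLike.real_smul_eq_coe_smul (K := ℂ) _ _).symm

lemma dm_mul_dm_self {u : I → ℂ} (hu : braket u u = 1) : dm u * dm u = dm u := by
  rw [dm_mul_dm, hu, one_smul, dm_eq_vecMulVec]

lemma trace_dm_mul_dm (u v : I → ℂ) :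
    (dm u * dm v).trace = ((‖braket u v‖ ^ 2 : ℝ) : ℂ) := by
  rw [dm_mul_dm, Matrix.trace_vecMulVec, dotProduct_smul, dotProduct_comm,
    ← braket_eq_dotProduct, smul_eq_mul, braket_mul_braket_swap]

variable [DecidableEq I]

open scoped Matrix MatrixOrder

lemma psdSqrt_eq_cfcSqrt {A : Matrix I I ℂ} (h : A.PosSemidef) : psdSqrt A = CFC.sqrt A := by
  rw [CFC.sqrt_eq_cfc, cfc_nnreal_eq_real _ A h.nonneg, h.1.cfc_eq]
  simp only [psdSqrt, dif_pos h, Matrix.IsHermitian.cfc, Unitary.conjStarAlgAut_apply]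
  congr 3
  funext i
  simp [Real.coe_sqrt, h.eigenvalues_nonneg i]

lemma traceNorm_zero : traceNorm (0 : Matrix I I ℂ) = 0 := by
  rw [traceNorm, Matrix.conjTranspose_zero, zero_mul,
    psdSqrt_eq_cfcSqrt Matrix.PosSemidef.zero, CFC.sqrt_zero, Matrix.trace_zero, Complex.zero_re]

-- A Hermitian `A` with `A³ = c²A` has eigenvalues in `{0, ±c}`, so `|A| = A² / c`.
lemma traceNorm_eq_of_mul_self_mul_self {A : Matrix I I ℂ} (hA : A.IsHermitian) {c : ℝ}
    (hc : 0 < c) (h : A * A * A = c ^ 2 • A) : traceNorm A = (A * A).trace.re / c := by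
  set B : Matrix I I ℂ := c⁻¹ • (A * A)
  have hAA : Aᴴ * A = A * A := by rw [hA.eq]
  have hB : 0 ≤ B := by
    have := (Matrix.posSemidef_conjTranspose_mul_self A).smul (inv_nonneg.mpr hc.le)
    rwa [hAA, ← Matrix.nonneg_iff_posSemidef] at this
  have hBB : B * B = A * A := by
    rw [smul_mul_smul_comm, ← mul_assoc, h, smul_mul_assoc, smul_smul, ← pow_two, ← mul_pow,
      inv_mul_cancel₀ hc.ne', one_pow, one_smul]
  have hsqrt : CFC.sqrt (A * A) = B := by rw [← hBB, CFC.sqrt_mul_self B hB]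
  rw [traceNorm, psdSqrt_eq_cfcSqrt (Matrix.posSemidef_conjTranspose_mul_self A), hAA, hsqrt,
    Matrix.trace_smul, Complex.real_smul, Complex.re_ofReal_mul, inv_mul_eq_div]

lemma traceNorm_dm_sub_dm {ψ ψ' : I → ℂ} (hψ : braket ψ ψ = 1) (hψ' : braket ψ' ψ' = 1) :
    traceNorm (dm ψ - dm ψ') = 2 * √(1 - ‖braket ψ ψ'‖ ^ 2) := by
  set t := ‖braket ψ ψ'‖ ^ 2
  set Δ := dm ψ - dm ψ'
  have hswap : ‖braket ψ' ψ‖ ^ 2 = t := by rw [braket_swap, Complex.norm_conj]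
  have hΔ : Δ * Δ * Δ = (1 - t) • Δ :=
    sub_mul_self_mul_self_of_idempotent (dm_mul_dm_self hψ) (dm_mul_dm_self hψ')
      (dm_mul_dm_mul_dm ψ ψ') (by rw [dm_mul_dm_mul_dm, hswap])
  have htr : (Δ * Δ).trace = ((2 * (1 - t) : ℝ) : ℂ) := by
    simp only [Δ, sub_mul, mul_sub, Matrix.trace_sub, trace_dm_mul_dm, hswap, hψ, hψ',
      norm_one]
    push_cast [t]
    ring
  have ht : t ≤ 1 := by
    have := norm_inner_le_norm (𝕜 := ℂ) (WithLp.toLp 2 ψ : EuclideanSpace ℂ I)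
      (WithLp.toLp 2 ψ')
    rw [← braket_eq_inner, norm_toLp_eq_one hψ, norm_toLp_eq_one hψ', one_mul] at this
    exact pow_le_one₀ (norm_nonneg _) this
  rcases (sub_nonneg.mpr ht).eq_or_lt with h0 | hpos
  · have hΔ0 : Δ = 0 := by
      rw [← Matrix.trace_conjTranspose_mul_self_eq_zero_iff,
        ((dm_isHermitian ψ).sub (dm_isHermitian ψ')).eq, htr, ← h0, mul_zero,
        Complex.ofReal_zero]
    rw [hΔ0, traceNorm_zero, ← h0, Real.sqrt_zero, mul_zero]
  · rw [traceNorm_eq_of_mul_self_mul_self ((dm_isHermitian ψ).sub (dm_isHermitian ψ'))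
      (Real.sqrt_pos.mpr hpos) (by rwa [Real.sq_sqrt hpos.le]), htr, Complex.ofReal_re,
      mul_div_assoc, Real.div_sqrt]

end TraceNorm

section PartialTrace

variable {X Y : Type*}

def exchangeSnd (p : (X × Y) × (X × Y)) : (X × Y) × (X × Y) := ((p.1.1, p.2.2), (p.2.1, p.1.2))

lemma exchangeSnd_involutive : Function.Involutive (exchangeSnd (X := X) (Y := Y)) :=
  fun _ => rfl

variable [Fintype X] [Fintype Y]

lemma trace_ptraceA_mul_self (Ψ : X × Y → ℂ) :
    (ptraceA Ψ * ptraceA Ψ).trace =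
      braket (tensorSelf Ψ ∘ exchangeSnd) (tensorSelf Ψ) := by
  simp only [tensorSelf, Matrix.trace, Matrix.diag, Matrix.mul_apply, ptraceA, Matrix.of_apply,
    braket, Fintype.sum_prod_type, Function.comp, exchangeSnd, map_mul, Finset.sum_mul_sum]
  conv_lhs => enter [2, y]; rw [Finset.sum_comm]
  rw [Finset.sum_comm]
  refine Finset.sum_congr rfl fun x _ => Finset.sum_congr rfl fun y _ => ?_
  rw [Finset.sum_comm]
  exact Finset.sum_congr rfl fun x' _ => Finset.sum_congr rfl fun y' _ => by ring

lemma abs_purity_ptraceA_sub_le {Ψ Ψ' : X × Y → ℂ} (hΨ : braket Ψ Ψ = 1)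
    (hΨ' : braket Ψ' Ψ' = 1) :
    |purity (ptraceA Ψ) - purity (ptraceA Ψ')| ≤ 2 * √(1 - ‖braket Ψ Ψ'‖ ^ 4) := by
  set σ : Equiv.Perm ((X × Y) × (X × Y)) := exchangeSnd_involutive.toPerm
  set T := (LinearIsometryEquiv.piLpCongrLeft 2 ℂ ℂ σ.symm).toLinearIsometry
  have hunit : ∀ {Ψ : X × Y → ℂ}, braket Ψ Ψ = 1 → braket (tensorSelf Ψ) (tensorSelf Ψ) = 1 :=
    fun h => by rw [braket_tensorSelf, h, one_pow]
  have key :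
      ‖braket (tensorSelf Ψ ∘ σ) (tensorSelf Ψ) - braket (tensorSelf Ψ' ∘ σ) (tensorSelf Ψ')‖
        ≤ 2 * √(1 - ‖braket Ψ Ψ'‖ ^ 4) := by
    rw [braket_comp_perm_eq_inner, braket_comp_perm_eq_inner, show 4 = 2 * 2 by rfl, pow_mul,
      ← norm_pow, ← braket_tensorSelf, braket_eq_inner]
    exact norm_inner_map_self_sub_le T.toLinearMap (fun u => (T.norm_map u).le)
      (norm_toLp_eq_one (hunit hΨ)) (norm_toLp_eq_one (hunit hΨ'))
  calc |purity (ptraceA Ψ) - purity (ptraceA Ψ')|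
      = |((ptraceA Ψ * ptraceA Ψ).trace - (ptraceA Ψ' * ptraceA Ψ').trace).re| := by
        rw [Complex.sub_re]; rfl
    _ ≤ ‖(ptraceA Ψ * ptraceA Ψ).trace - (ptraceA Ψ' * ptraceA Ψ').trace‖ :=
        Complex.abs_re_le_norm _
    _ ≤ 2 * √(1 - ‖braket Ψ Ψ'‖ ^ 4) := by
        rw [trace_ptraceA_mul_self, trace_ptraceA_mul_self]
        exact key

end PartialTrace

section Qubits

variable {n : ℕ}

def qubitSplit (γ : Finset (Fin n)) :
    ({i // i ∉ γ} → Fin 2) × ({i // i ∈ γ} → Fin 2) ≃ (Fin n → Fin 2) :=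
  (Equiv.prodComm _ _).trans (Equiv.piEquivPiSubtypeProd (· ∈ γ) fun _ => Fin 2).symm

lemma reduced_eq_ptraceA (γ : Finset (Fin n)) (ψ : (Fin n → Fin 2) → ℂ) :
    reduced γ ψ = ptraceA (ψ ∘ qubitSplit γ) := rfl

lemma abs_purity_reduced_sub_le {ψ ψ' : (Fin n → Fin 2) → ℂ} (hψ : braket ψ ψ = 1)
    (hψ' : braket ψ' ψ' = 1) (γ : Finset (Fin n)) :
    |purity (reduced γ ψ) - purity (reduced γ ψ')| ≤ 2 * √(1 - ‖braket ψ ψ'‖ ^ 4) := by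
  rw [reduced_eq_ptraceA, reduced_eq_ptraceA, ← braket_comp_equiv (qubitSplit γ)]
  exact abs_purity_ptraceA_sub_le (by rwa [braket_comp_equiv]) (by rwa [braket_comp_equiv])

def bipartiteConcurrence (γ : Finset (Fin n)) (ψ : (Fin n → Fin 2) → ℂ) : ℝ :=
  √(2 * (1 - purity (reduced γ ψ)))

lemma gme_eq_sInf_image (ψ : (Fin n → Fin 2) → ℂ) :
    gme ψ = sInf ((bipartiteConcurrence · ψ) '' {γ | γ ≠ ∅ ∧ γ ≠ Finset.univ}) := by
  simp only [gme, bipartiteConcurrence, Set.image, Set.mem_ofPred_eq, and_assoc, eq_comm]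

lemma abs_bipartiteConcurrence_sub_le {ψ ψ' : (Fin n → Fin 2) → ℂ} (hψ : braket ψ ψ = 1)
    (hψ' : braket ψ' ψ' = 1) (γ : Finset (Fin n)) :
    |bipartiteConcurrence γ ψ - bipartiteConcurrence γ ψ'| ≤
      2 ^ ((3 : ℝ) / 4) * √(traceNorm (dm ψ - dm ψ')) := by
  set s := ‖braket ψ ψ'‖
  have hpurity :
      |purity (reduced γ ψ) - purity (reduced γ ψ')| ≤ √2 * traceNorm (dm ψ - dm ψ') := by
    refine (abs_purity_reduced_sub_le hψ hψ' γ).trans ?_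
    rw [traceNorm_dm_sub_dm hψ hψ', mul_left_comm, ← Real.sqrt_mul zero_le_two]
    gcongr
    nlinarith [sq_nonneg (1 - s ^ 2)]
  have hcoeff : (2 : ℝ) ^ ((3 : ℝ) / 4) = √(2 * √2) := by
    rw [Real.sqrt_eq_rpow, Real.sqrt_eq_rpow, ← Real.rpow_one_add' zero_le_two (by norm_num),
      ← Real.rpow_mul zero_le_two]
    norm_num
  calc |bipartiteConcurrence γ ψ - bipartiteConcurrence γ ψ'|
      ≤ √|2 * (1 - purity (reduced γ ψ)) - 2 * (1 - purity (reduced γ ψ'))| :=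
        abs_sqrt_sub_sqrt_le _ _
    _ = √(2 * |purity (reduced γ ψ) - purity (reduced γ ψ')|) := by
        rw [← mul_sub, abs_mul, abs_two, abs_sub_comm, sub_sub_sub_cancel_left]
    _ ≤ √(2 * (√2 * traceNorm (dm ψ - dm ψ'))) := by gcongr
    _ = 2 ^ ((3 : ℝ) / 4) * √(traceNorm (dm ψ - dm ψ')) := by
        rw [hcoeff, ← mul_assoc, Real.sqrt_mul (by positivity)]

end Qubits

theorem gme_continuity_general (n : ℕ)
    (ψ ψ' : (Fin n → Fin 2) → ℂ) (hψ : braket ψ ψ = 1) (hψ' : braket ψ' ψ' = 1) :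
    |gme ψ - gme ψ'| ≤ (2 : ℝ) ^ ((3 : ℝ) / 4) * Real.sqrt (traceNorm (dm ψ - dm ψ')) := by
  have hbdd : ∀ χ : (Fin n → Fin 2) → ℂ,
      BddBelow ((bipartiteConcurrence · χ) '' {γ | γ ≠ ∅ ∧ γ ≠ Finset.univ}) :=
    fun χ => ⟨0, by rintro _ ⟨γ, -, rfl⟩; exact Real.sqrt_nonneg _⟩
  rw [gme_eq_sInf_image, gme_eq_sInf_image]
  exact abs_sInf_image_sub_sInf_image_le (hbdd ψ) (hbdd ψ') (by positivity)
    fun γ _ => abs_bipartiteConcurrence_sub_le hψ hψ' γ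

/-- Continuity of the GME-concurrence:
`|C_GME(ψ) − C_GME(ψ')| ≤ 2^{3/4} √(‖ψ − ψ'‖₁)` for unit vectors `ψ, ψ' ∈ (ℂ²)^{⊗n}`. -/
theorem gme_continuity (n : ℕ) (hn : 2 ≤ n)
    (ψ ψ' : (Fin n → Fin 2) → ℂ) (hψ : braket ψ ψ = 1) (hψ' : braket ψ' ψ' = 1) :
    |gme ψ - gme ψ'| ≤ (2 : ℝ) ^ ((3 : ℝ) / 4) * Real.sqrt (traceNorm (dm ψ - dm ψ')) :=
  gme_continuity_general n ψ ψ' hψ hψ'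

end QIpaper
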